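/- arXiv:2209.10443 — 2 statements merged into one kernel-verified Lean document; each statement's English description precedes it below -/
import Mathlib

section
/- Let r ≥ 3, A ∈ 𝒯_r and e_0 ∈ E(A). For all 1 ≤ i < j ≤ r, the polynomial (z_i − z_j) ∘ Φ_A in the variables (z_A, x_A, (ζ_e)_{e∈E(A)}) is nonzero, and its ζ_{e_0}-adic order equals 1 if both i and j belong to Leaf(e_0), and equals 0 otherwise. -/
/-!
Telescoping `z_{R(v)}` along the path from the root to the leaf `i` gives
`z_i = z_A + ∑ x_v`, the sum over the vertices `v` where the path turns left, and
`x_v = x_A ∏_{e above v} ζ_e`. Since `Ψ_A ∘ Φ_A = id` on the dense set where `x_A` and all `ζ_e`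
are nonzero, this determines `P i` as a sum of squarefree monomials. If the paths to `i` and `j`
fork at the vertex `c`, the terms above `c` cancel in `P i - P j`, leaving `± x_A ∏_{e above c} ζ_e`
plus monomials that are multiples of it. Hence `ζ_{e₀}` divides `P i - P j` exactly once when `e₀`
lies above `c`, i.e. when both leaves descend from `e₀`, and not at all otherwise.
-/

noncomputable section

/-- A plane (rooted) binary tree with leaves labeled by elements of `Fin r`. -/
inductive PTree (r : ℕ) : Type
  | leaf : Fin r → PTree r
  | node : PTree r → PTree r → PTree r

namespace PTree

variable {r : ℕ}

/-- The labels of the leaves of the tree, listed from left to right. -/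
def leafLabels : PTree r → List (Fin r)
  | .leaf i => [i]
  | .node l t => l.leafLabels ++ t.leafLabels

/-- `A ∈ 𝒯_r`: the `r` leaves of `A` are labeled bijectively by `Fin r`. -/
def IsTree (A : PTree r) : Prop :=
  A.leafLabels.Nodup ∧ A.leafLabels.length = r

/-- The label of the rightmost leaf of the tree. -/
def rightmost : PTree r → Fin r
  | .leaf i => i
  | .node _ t => t.rightmost

/-- The subtree of a tree at the address `p` (`false` = go to the left child,
`true` = go to the right child), if the address is valid. -/
def subtreeAt : PTree r → List Bool → Option (PTree r)
  | t, [] => some t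
  | .leaf _, _ :: _ => none
  | .node l t, b :: p => (if b then t else l).subtreeAt p

/-- `p` is the address of an internal (non-leaf) vertex of `A`; the set of such
addresses is `V(A)`. -/
def IsVertex (A : PTree r) (p : List Bool) : Prop :=
  ∃ l t : PTree r, A.subtreeAt p = some (.node l t)

/-- `p` is the address of the lower endpoint `d(e)` of an internal edge `e` of
`A` (an edge not adjacent to a leaf); the upper endpoint `u(e)` is at the
address `p.dropLast`.  The set of such addresses is `E(A)`. -/
def IsEdge (A : PTree r) (p : List Bool) : Prop :=
  p ≠ [] ∧ A.IsVertex p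

/-- The type `E(A)` of internal edges of `A`. -/
abbrev Edge (A : PTree r) : Type := {p : List Bool // A.IsEdge p}

/-- `x_v = z_{L(v)} − z_{R(v)}` for the internal vertex `v` given as the
subtree rooted at it (junk value `0` at leaves). -/
def xval (z : Fin r → ℂ) : PTree r → ℂ
  | .leaf _ => 0
  | .node l t => z l.rightmost - z t.rightmost

/-- The coordinate `x_v` for the vertex `v` of `A` with address `p`. -/
def xAt (A : PTree r) (z : Fin r → ℂ) (p : List Bool) : ℂ :=
  match A.subtreeAt p with
  | some t => xval z t
  | none => 0

/-- The coordinate `ζ_e = x_{d(e)} / x_{u(e)}` for the edge of `A` whose lower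
endpoint has address `p` (its upper endpoint has address `p.dropLast`). -/
def zetaAt (A : PTree r) (z : Fin r → ℂ) (p : List Bool) : ℂ :=
  xAt A z p / xAt A z p.dropLast

/-- `Leaf(e)`: the labels of the leaves descending from the vertex of `A` with
address `p`. -/
def leavesAt (A : PTree r) (p : List Bool) : List (Fin r) :=
  ((A.subtreeAt p).map leafLabels).getD []

/-- The label of the rightmost leaf descending from the vertex of `A` with
address `p`. -/
def rightmostAt (A : PTree r) (p : List Bool) : Option (Fin r) :=
  (A.subtreeAt p).map rightmost

end PTree

/-- The configuration space `X_r = {(z_1,…,z_r) ∈ ℂ^r : z_i ≠ z_j for i ≠ j}`. -/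
def ConfigSpace (r : ℕ) : Set (Fin r → ℂ) :=
  {z | ∀ i j : Fin r, i ≠ j → z i ≠ z j}

namespace PTree

variable {r : ℕ}

/-- The `A`-coordinate map `Ψ_A = (z_A, x_A, (ζ_e)_{e ∈ E(A)})`, where
`z_A = z_{r_A}` (`r_A` the rightmost leaf of `A`) and `x_A = x_{t_A}` (`t_A`
the root of `A`). -/
def psi (A : PTree r) (z : Fin r → ℂ) : ℂ × ℂ × (A.Edge → ℂ) :=
  (z A.rightmost, xval z A, fun e => A.zetaAt z e.1)

/-- The variable index type for the polynomial ring
`ℂ[z_A, x_A, ζ_e (e ∈ E(A))]`. -/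
abbrev Idx (A : PTree r) : Type := Unit ⊕ Unit ⊕ A.Edge

/-- The point of `ℂ^{Idx A}` corresponding to `w = (z_A, x_A, (ζ_e)_e)`. -/
def assign (A : PTree r) (w : ℂ × ℂ × (A.Edge → ℂ)) : A.Idx → ℂ :=
  Sum.elim (fun _ => w.1) (Sum.elim (fun _ => w.2.1) fun e => w.2.2 e)

/-- The polynomial map `Φ_A : ℂ × ℂ × ℂ^{E(A)} → ℂ^r` determined by a family
of polynomials `P`. -/
def phiMap (A : PTree r) (P : Fin r → MvPolynomial A.Idx ℂ)
    (w : ℂ × ℂ × (A.Edge → ℂ)) : Fin r → ℂ :=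
  fun i => MvPolynomial.eval (A.assign w) (P i)

/-- `Φ_A ∘ Ψ_A = id` on `X_r`. -/
def PhiPsiId (A : PTree r) (P : Fin r → MvPolynomial A.Idx ℂ) : Prop :=
  ∀ z ∈ ConfigSpace r, A.phiMap P (A.psi z) = z

/-- `Ψ_A ∘ Φ_A = id` on `ℂ × ℂ^× × (ℂ^×)^{E(A)}`. -/
def PsiPhiId (A : PTree r) (P : Fin r → MvPolynomial A.Idx ℂ) : Prop :=
  ∀ w : ℂ × ℂ × (A.Edge → ℂ), w.2.1 ≠ 0 → (∀ e, w.2.2 e ≠ 0) →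
    A.psi (A.phiMap P w) = w

end PTree

theorem MvPolynomial.X_pow_dvd_iff {σ R : Type*} [CommSemiring R] {s : σ} {n : ℕ}
    {φ : MvPolynomial σ R} : X s ^ n ∣ φ ↔ ∀ m ∈ φ.support, n ≤ m s := by
  rw [← Ideal.mem_span_singleton, X_pow_eq_monomial,
    ← Set.image_singleton (f := fun m => monomial m (1 : R)), mem_ideal_span_monomial_image]
  simp [Finsupp.single_le_iff]

theorem List.exists_fork_of_not_prefix {α : Type*} :
    ∀ {l l' : List α}, ¬ l <+: l' → ¬ l' <+: l →
      ∃ c a a' s s', a ≠ a' ∧ l = c ++ a :: s ∧ l' = c ++ a' :: s'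
  | [], _, h, _ => absurd nil_prefix h
  | _ :: _, [], _, h' => absurd nil_prefix h'
  | a :: l, a' :: l', h, h' => by
    by_cases ha : a = a'
    · subst ha
      obtain ⟨c, b, b', s, s', hb, rfl, rfl⟩ :=
        exists_fork_of_not_prefix (by simpa using h) (by simpa using h')
      exact ⟨a :: c, b, b', s, s', hb, rfl, rfl⟩
    · exact ⟨[], a, a', l, l', ha, rfl, rfl⟩

theorem List.prefix_of_prefix_fork {α : Type*} {e c s s' : List α} {a a' : α} (ha : a ≠ a')
    (h : e <+: c ++ a :: s) (h' : e <+: c ++ a' :: s') : e <+: c := by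
  induction c generalizing e with
  | nil =>
    cases e with
    | nil => exact nil_prefix
    | cons x e => exact absurd ((cons_prefix_cons.1 h).1.symm.trans (cons_prefix_cons.1 h').1) ha
  | cons y c ih =>
    cases e with
    | nil => exact nil_prefix
    | cons x e =>
      obtain ⟨rfl, he⟩ := cons_prefix_cons.1 h
      exact cons_prefix_cons.2 ⟨rfl, ih he (cons_prefix_cons.1 h').2⟩

namespace PTree

open MvPolynomial

variable {r : ℕ}

theorem subtreeAt_nil (A : PTree r) : A.subtreeAt [] = some A := by
  cases A <;> rfl

theorem subtreeAt_append (A : PTree r) (p q : List Bool) :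
    A.subtreeAt (p ++ q) = (A.subtreeAt p).bind (·.subtreeAt q) := by
  induction p generalizing A with
  | nil => simp [subtreeAt_nil]
  | cons b p ih =>
    cases A with
    | leaf i => rfl
    | node l t => exact ih _

theorem isVertex_of_subtreeAt_append_cons {A t : PTree r} {p q : List Bool} {b : Bool}
    (h : A.subtreeAt (p ++ b :: q) = some t) : A.IsVertex p := by
  rw [subtreeAt_append] at h
  cases hp : A.subtreeAt p with
  | none => simp [hp] at h
  | some u =>
    cases u with
    | leaf i => simp [hp, subtreeAt] at h
    | node l t' => exact ⟨l, t', hp⟩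

theorem finite_setOf_isVertex (A : PTree r) : {p | A.IsVertex p}.Finite := by
  induction A with
  | leaf i =>
    refine Set.finite_empty.subset ?_
    rintro (_ | ⟨b, p⟩) ⟨l, t, h⟩ <;> simp [subtreeAt] at h
  | node l t ihl iht =>
    refine (((ihl.image (List.cons false)).union (iht.image (List.cons true))).insert []).subset ?_
    rintro (_ | ⟨_ | _, p⟩) hp
    · exact Set.mem_insert _ _
    · exact Or.inr (Or.inl ⟨p, hp, rfl⟩)
    · exact Or.inr (Or.inr ⟨p, hp, rfl⟩)

instance (A : PTree r) : Finite A.Edge :=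
  ((finite_setOf_isVertex A).subset fun _ hp => hp.2).to_subtype

theorem exists_subtreeAt_eq_leaf {t : PTree r} {i : Fin r} (h : i ∈ t.leafLabels) :
    ∃ p, t.subtreeAt p = some (.leaf i) := by
  induction t with
  | leaf j => exact ⟨[], by simp_all [leafLabels, subtreeAt]⟩
  | node l t ihl iht =>
    rcases List.mem_append.1 h with h | h
    · obtain ⟨p, hp⟩ := ihl h
      exact ⟨false :: p, hp⟩
    · obtain ⟨p, hp⟩ := iht h
      exact ⟨true :: p, hp⟩

theorem leafLabels_subset_of_subtreeAt {t s : PTree r} {p : List Bool}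
    (h : t.subtreeAt p = some s) : s.leafLabels ⊆ t.leafLabels := by
  induction p generalizing t with
  | nil =>
    obtain rfl := Option.some.inj ((subtreeAt_nil t).symm.trans h)
    exact List.Subset.refl _
  | cons b p ih =>
    cases t with
    | leaf i => cases h
    | node l t =>
      cases b
      · exact List.Subset.trans (ih h) (List.subset_append_left _ _)
      · exact List.Subset.trans (ih h) (List.subset_append_right _ _)

theorem eq_of_subtreeAt_eq_leaf {t : PTree r} (hn : t.leafLabels.Nodup) {p p' : List Bool}
    {i : Fin r} (h : t.subtreeAt p = some (.leaf i)) (h' : t.subtreeAt p' = some (.leaf i)) :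
    p = p' := by
  induction t generalizing p p' with
  | leaf j =>
    cases p <;> cases p' <;> simp_all [subtreeAt]
  | node l t ihl iht =>
    obtain ⟨hl, ht, hlt⟩ := List.nodup_append.1 hn
    have mem_left (q) (hq : l.subtreeAt q = some (.leaf i)) : i ∈ l.leafLabels :=
      leafLabels_subset_of_subtreeAt hq (List.mem_singleton_self i)
    have mem_right (q) (hq : t.subtreeAt q = some (.leaf i)) : i ∈ t.leafLabels :=
      leafLabels_subset_of_subtreeAt hq (List.mem_singleton_self i)
    rcases p with _ | ⟨_ | _, q⟩ <;> rcases p' with _ | ⟨_ | _, q'⟩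
    all_goals first | cases h | cases h' | skip
    · rw [ihl hl h h']
    · exact absurd rfl (hlt i (mem_left q h) i (mem_right q' h'))
    · exact absurd rfl (hlt i (mem_left q' h') i (mem_right q h))
    · rw [iht ht h h']

theorem IsTree.mem_leafLabels {A : PTree r} (hA : A.IsTree) (i : Fin r) : i ∈ A.leafLabels := by
  have : A.leafLabels.toFinset = Finset.univ :=
    Finset.eq_univ_of_card _ (by rw [List.toFinset_card_of_nodup hA.1, hA.2, Fintype.card_fin])
  rw [← List.mem_toFinset, this]
  exact Finset.mem_univ i

variable {A : PTree r}

theorem not_prefix_of_subtreeAt_eq_leaf {p p' : List Bool} {i j : Fin r}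
    (hp : A.subtreeAt p = some (.leaf i)) (hp' : A.subtreeAt p' = some (.leaf j)) (hij : i ≠ j) :
    ¬ p <+: p' := by
  rintro ⟨q, rfl⟩
  rw [subtreeAt_append, hp, Option.bind_some] at hp'
  cases q with
  | nil => cases hp'; exact hij rfl
  | cons b q => cases hp'

theorem mem_leavesAt_iff (hn : A.leafLabels.Nodup) {e p : List Bool} {i : Fin r}
    (hp : A.subtreeAt p = some (.leaf i)) : i ∈ A.leavesAt e ↔ e <+: p := by
  rw [leavesAt]
  cases he : A.subtreeAt e with
  | none =>
    simp only [Option.map_none, Option.getD_none, List.not_mem_nil, false_iff]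
    rintro ⟨q, rfl⟩
    rw [subtreeAt_append, he] at hp
    cases hp
  | some u =>
    simp only [Option.map_some, Option.getD_some]
    constructor
    · intro hi
      obtain ⟨q, hq⟩ := exists_subtreeAt_eq_leaf hi
      rw [eq_of_subtreeAt_eq_leaf hn hp (by rw [subtreeAt_append, he]; exact hq)]
      exact List.prefix_append _ _
    · rintro ⟨q, rfl⟩
      rw [subtreeAt_append, he, Option.bind_some] at hp
      exact leafLabels_subset_of_subtreeAt hp (List.mem_singleton_self i)

variable (A)

/-- The exponent of the monomial `x_A ∏_{e ⊑ q} ζ_e`, which expresses `x_q` in `A`-coordinates. -/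
def pathExp (q : List Bool) : A.Idx →₀ ℕ :=
  Finsupp.equivFunOnFinite.symm (Sum.elim 0 (Sum.elim 1 fun e => if e.1 <+: q then 1 else 0))

def pathMonomial (q : List Bool) : MvPolynomial A.Idx ℂ :=
  monomial (A.pathExp q) 1

/-- `leftTurnSum A c s` expresses `z_{R(c ++ s)} - z_{R(c)}` in `A`-coordinates: each left turn
`b = false` at a vertex `d` on the way from `c` to `c ++ s` contributes `x_d`. -/
def leftTurnSum (c : List Bool) : List Bool → MvPolynomial A.Idx ℂ
  | [] => 0
  | b :: s => (if b then 0 else A.pathMonomial c) + leftTurnSum (c ++ [b]) s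

def leafPoly (p : List Bool) : MvPolynomial A.Idx ℂ :=
  X (Sum.inl ()) + A.leftTurnSum [] p

variable {A}

theorem pathExp_apply_edge (q : List Bool) (e : A.Edge) :
    A.pathExp q (Sum.inr (Sum.inr e)) = if e.1 <+: q then 1 else 0 :=
  rfl

theorem pathExp_nil : A.pathExp [] = Finsupp.single (Sum.inr (Sum.inl ())) 1 := by
  ext (_ | _ | e)
  · simp [pathExp]
  · simp [pathExp]
  · simp [pathExp_apply_edge, e.2.1]

theorem pathExp_concat {q : List Bool} {b : Bool} (he : A.IsEdge (q ++ [b])) :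
    A.pathExp (q ++ [b]) = A.pathExp q + Finsupp.single (Sum.inr (Sum.inr ⟨q ++ [b], he⟩)) 1 := by
  ext (_ | _ | e)
  · simp [pathExp]
  · simp [pathExp]
  · by_cases h : e = ⟨q ++ [b], he⟩
    · subst h
      have : ¬ q ++ [b] <+: q := fun hq => by simpa using hq.length_le
      simp [pathExp_apply_edge, this]
    · simp [pathExp_apply_edge, List.prefix_concat_iff, Subtype.ext_iff.not.1 h, Ne.symm h]

theorem leftTurnSum_append (c s s' : List Bool) :
    A.leftTurnSum c (s ++ s') = A.leftTurnSum c s + A.leftTurnSum (c ++ s) s' := by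
  induction s generalizing c with
  | nil => simp [leftTurnSum]
  | cons b s ih => simp [leftTurnSum, ih, add_assoc]

variable {z : Fin r → ℂ}

theorem eval_pathMonomial (hζ : ∀ e : A.Edge, A.zetaAt z e.1 ≠ 0) {q : List Bool}
    (hq : A.IsVertex q) : eval (A.assign (A.psi z)) (A.pathMonomial q) = A.xAt z q := by
  induction q using List.reverseRecOn with
  | nil => rw [pathMonomial, pathExp_nil, ← X, eval_X, xAt, subtreeAt_nil]; rfl
  | append_singleton q b ih =>
    obtain ⟨l, t, hqb⟩ := hq
    have he : A.IsEdge (q ++ [b]) := ⟨by simp, l, t, hqb⟩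
    have hxq : A.xAt z q ≠ 0 := fun h0 => hζ ⟨_, he⟩ (by simp [zetaAt, h0])
    rw [pathMonomial, pathExp_concat he, monomial_add_single, pow_one, map_mul, ← pathMonomial,
      ih (isVertex_of_subtreeAt_append_cons (by simpa using hqb)), eval_X]
    change A.xAt z q * (A.xAt z (q ++ [b]) / A.xAt z (q ++ [b]).dropLast) = _
    rw [List.dropLast_concat, mul_div_cancel₀ _ hxq]

theorem eval_leftTurnSum (hζ : ∀ e : A.Edge, A.zetaAt z e.1 ≠ 0) {c s : List Bool}
    {u t : PTree r} (hc : A.subtreeAt c = some u) (hs : u.subtreeAt s = some t) :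
    eval (A.assign (A.psi z)) (A.leftTurnSum c s) = z t.rightmost - z u.rightmost := by
  induction s generalizing c u with
  | nil =>
    obtain rfl := Option.some.inj ((subtreeAt_nil u).symm.trans hs)
    simp [leftTurnSum]
  | cons b s ih =>
    cases u with
    | leaf i => cases hs
    | node l t' =>
      have hcb : A.subtreeAt (c ++ [b]) = some (if b then t' else l) := by
        rw [subtreeAt_append, hc]; rfl
      rw [leftTurnSum, map_add, ih hcb hs]
      cases b
      · rw [if_neg Bool.false_ne_true, eval_pathMonomial hζ ⟨l, t', hc⟩, xAt, hc]
        simp only [xval, rightmost, Bool.false_eq_true, if_false]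
        ring
      · simp [rightmost]

theorem eval_leafPoly (hζ : ∀ e : A.Edge, A.zetaAt z e.1 ≠ 0) {p : List Bool} {t : PTree r}
    (hp : A.subtreeAt p = some t) : eval (A.assign (A.psi z)) (A.leafPoly p) = z t.rightmost := by
  rw [leafPoly, map_add, eval_leftTurnSum hζ (subtreeAt_nil A) hp, eval_X]
  exact add_sub_cancel _ _

theorem leftTurnSum_mem_restrictSupport (c s : List Bool) :
    A.leftTurnSum c s ∈ restrictSupport ℂ (Set.range fun q => A.pathExp (c ++ q)) := by
  induction s generalizing c with
  | nil => exact zero_mem _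
  | cons b s ih =>
    refine add_mem ?_ (restrictSupport_mono ℂ ?_ (ih (c ++ [b])))
    · split_ifs
      · exact zero_mem _
      · exact (monomial_mem_restrictSupport ℂ).2 (Or.inl ⟨[], by simp⟩)
    · rintro _ ⟨q, rfl⟩
      exact ⟨b :: q, by simp⟩

/-- Below the fork at `c`, every monomial of `leftTurnSum` contains the variable of the edge
`c ++ [b]`, which the monomial `pathExp A c` lacks. -/
theorem coeff_pathExp_leftTurnSum_concat {c s : List Bool} {b : Bool} {t : PTree r}
    (ht : A.subtreeAt (c ++ b :: s) = some t) :
    coeff (A.pathExp c) (A.leftTurnSum (c ++ [b]) s) = 0 := by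
  cases s with
  | nil => exact coeff_zero _
  | cons b₂ s =>
    have he : A.IsEdge (c ++ [b]) :=
      ⟨by simp, isVertex_of_subtreeAt_append_cons (by simpa using ht)⟩
    refine notMem_support_iff.1 fun hm => ?_
    obtain ⟨q, hq⟩ := leftTurnSum_mem_restrictSupport (A := A) (c ++ [b]) (b₂ :: s) hm
    have hc : ¬ c ++ [b] <+: c := fun h => by simpa using h.length_le
    simpa [pathExp_apply_edge, hc] using congrArg (· (Sum.inr (Sum.inr ⟨_, he⟩))) hq

theorem coeff_pathExp_leftTurnSum_sub_ne_zero {c s s' : List Bool} {b b' : Bool}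
    {t t' : PTree r} (ht : A.subtreeAt (c ++ b :: s) = some t)
    (ht' : A.subtreeAt (c ++ b' :: s') = some t') (hb : b ≠ b') :
    coeff (A.pathExp c) (A.leftTurnSum c (b :: s) - A.leftTurnSum c (b' :: s')) ≠ 0 := by
  simp only [leftTurnSum, coeff_sub, coeff_add, coeff_pathExp_leftTurnSum_concat ht,
    coeff_pathExp_leftTurnSum_concat ht']
  cases b <;> cases b' <;> simp_all [pathMonomial]

theorem X_pow_dvd_iff_of_mem_restrictSupport {c : List Bool} {φ : MvPolynomial A.Idx ℂ}
    (hφ : φ ∈ restrictSupport ℂ (Set.range fun q => A.pathExp (c ++ q)))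
    (hc : coeff (A.pathExp c) φ ≠ 0) (e : A.Edge) (n : ℕ) :
    X (Sum.inr (Sum.inr e)) ^ n ∣ φ ↔ n ≤ if e.1 <+: c then 1 else 0 := by
  rw [X_pow_dvd_iff]
  refine ⟨fun h => h _ (mem_support_iff.2 hc), fun hn m hm => ?_⟩
  obtain ⟨q, rfl⟩ := hφ hm
  rw [pathExp_apply_edge]
  by_cases hec : e.1 <+: c
  · rw [if_pos hec] at hn
    rwa [if_pos (hec.trans (List.prefix_append c q))]
  · rw [if_neg hec] at hn
    omega

theorem eq_leafPoly_of_psiPhiId {P : Fin r → MvPolynomial A.Idx ℂ} (hP : A.PsiPhiId P)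
    {p : List Bool} {i : Fin r} (hp : A.subtreeAt p = some (.leaf i)) : P i = A.leafPoly p := by
  refine funext_set (fun _ => {0}ᶜ) (fun _ => (Set.finite_singleton 0).infinite_compl)
    fun a ha => ?_
  obtain ⟨w, rfl⟩ : ∃ w, A.assign w = a :=
    ⟨(a (.inl ()), a (.inr (.inl ())), fun e => a (.inr (.inr e))),
      funext fun k => by rcases k with _ | _ | _ <;> rfl⟩
  have hw : ∀ k, A.assign w k ≠ 0 := fun k => ha k (Set.mem_univ k)
  have hψ : A.psi (A.phiMap P w) = w := hP w (hw (.inr (.inl ()))) fun e => hw (.inr (.inr e))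
  have hζ (e : A.Edge) : A.zetaAt (A.phiMap P w) e.1 ≠ 0 :=
    (congrArg (fun v => v.2.2 e) hψ).trans_ne (hw (.inr (.inr e)))
  have h := eval_leafPoly hζ hp
  rw [hψ] at h
  exact h.symm

end PTree

open PTree MvPolynomial in
theorem stmt_10_general {r : ℕ} (A : PTree r) (hA : A.IsTree)
    (e₀ : List Bool) (he₀ : A.IsEdge e₀)
    (P : Fin r → MvPolynomial A.Idx ℂ)
    (hPsiPhi : A.PsiPhiId P)
    (i j : Fin r) (hij : i < j) :
    P i - P j ≠ 0 ∧
      ∀ n : ℕ,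
        (MvPolynomial.X (Sum.inr (Sum.inr ⟨e₀, he₀⟩)) : MvPolynomial A.Idx ℂ) ^ n ∣
            (P i - P j) ↔
          n ≤ (if i ∈ A.leavesAt e₀ ∧ j ∈ A.leavesAt e₀ then 1 else 0) := by
  obtain ⟨p, hp⟩ := exists_subtreeAt_eq_leaf (hA.mem_leafLabels i)
  obtain ⟨p', hp'⟩ := exists_subtreeAt_eq_leaf (hA.mem_leafLabels j)
  obtain ⟨c, b, b', s, s', hb, rfl, rfl⟩ := List.exists_fork_of_not_prefix
    (not_prefix_of_subtreeAt_eq_leaf hp hp' hij.ne) (not_prefix_of_subtreeAt_eq_leaf hp' hp hij.ne')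
  have hφ : P i - P j = A.leftTurnSum c (b :: s) - A.leftTurnSum c (b' :: s') := by
    rw [eq_leafPoly_of_psiPhiId hPsiPhi hp, eq_leafPoly_of_psiPhiId hPsiPhi hp', leafPoly,
      leafPoly, leftTurnSum_append, leftTurnSum_append]
    abel
  have hcoeff := coeff_pathExp_leftTurnSum_sub_ne_zero hp hp' hb
  have hmem := sub_mem (leftTurnSum_mem_restrictSupport (A := A) c (b :: s))
    (leftTurnSum_mem_restrictSupport c (b' :: s'))
  have hleaves : i ∈ A.leavesAt e₀ ∧ j ∈ A.leavesAt e₀ ↔ e₀ <+: c := by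
    rw [mem_leavesAt_iff hA.1 hp, mem_leavesAt_iff hA.1 hp']
    exact ⟨fun h => List.prefix_of_prefix_fork hb h.1 h.2,
      fun h => ⟨h.trans (List.prefix_append _ _), h.trans (List.prefix_append _ _)⟩⟩
  rw [hφ]
  refine ⟨fun h0 => hcoeff (by rw [h0, coeff_zero]), fun n => ?_⟩
  rw [X_pow_dvd_iff_of_mem_restrictSupport hmem hcoeff]
  simp only [hleaves]

/-- Let `r ≥ 3`, `A ∈ 𝒯_r` and `e₀ ∈ E(A)`, and let `Φ_A` (with components the
polynomials `P i`) be the polynomial map inverting `Ψ_A`.  For all `i < j`, the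
polynomial `(z_i − z_j) ∘ Φ_A = P i − P j` in the variables
`(z_A, x_A, (ζ_e)_{e∈E(A)})` is nonzero, and its `ζ_{e₀}`-adic order (the
largest `n` with `ζ_{e₀}^n ∣ (P i − P j)`) equals `1` if both `i` and `j`
belong to `Leaf(e₀)`, and equals `0` otherwise. -/
theorem stmt_10 {r : ℕ} (hr : 3 ≤ r) (A : PTree r) (hA : A.IsTree)
    (e₀ : List Bool) (he₀ : A.IsEdge e₀)
    (P : Fin r → MvPolynomial A.Idx ℂ)
    (hPhiPsi : A.PhiPsiId P) (hPsiPhi : A.PsiPhiId P)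
    (i j : Fin r) (hij : i < j) :
    P i - P j ≠ 0 ∧
      ∀ n : ℕ,
        (MvPolynomial.X (Sum.inr (Sum.inr ⟨e₀, he₀⟩)) : MvPolynomial A.Idx ℂ) ^ n ∣
            (P i - P j) ↔
          n ≤ (if i ∈ A.leavesAt e₀ ∧ j ∈ A.leavesAt e₀ then 1 else 0) :=
  stmt_10_general A hA e₀ he₀ P hPsiPhi i j hij
end
end

section
/- Let r ≥ 3, A ∈ 𝒯_r and let 𝔭 = (p_e)_{e∈E(A)} be A-admissible. Then U_A^𝔭 is an open, connected and simply connected subset of X_r, and the same holds for U_A = ⋃ U_A^𝔭 (union over all A-admissible 𝔭). -/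
noncomputable section

/-- The cut plane `ℂ^cut = ℂ ∖ ℝ_{≤0}`. -/
def cutPlane : Set ℂ := {w : ℂ | 0 < w.re ∨ w.im ≠ 0}

namespace PTree

variable {r : ℕ}

/-- The region `ℂ × ℂ^cut × ∏_{e ∈ E(A)} 𝔻_{p_e}^cut` in `ℂ × ℂ × ℂ^{E(A)}`. -/
def cutRegion (A : PTree r) (p : A.Edge → ℝ) : Set (ℂ × ℂ × (A.Edge → ℂ)) :=
  {w | w.2.1 ∈ cutPlane ∧ ∀ e, w.2.2 e ∈ cutPlane ∧ ‖w.2.2 e‖ < p e}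

/-- The tuple `p = (p_e)_{e∈E(A)}` is `A`-admissible:
`Φ_A(ℂ × ℂ^× × ∏_e 𝔻_{p_e}^×) ⊆ X_r`. -/
def Admissible (A : PTree r) (P : Fin r → MvPolynomial A.Idx ℂ)
    (p : A.Edge → ℝ) : Prop :=
  ∀ w : ℂ × ℂ × (A.Edge → ℂ), w.2.1 ≠ 0 →
    (∀ e, w.2.2 e ≠ 0 ∧ ‖w.2.2 e‖ < p e) →
      A.phiMap P w ∈ ConfigSpace r

/-- `U_A^𝔭 = Φ_A(ℂ × ℂ^cut × ∏_e 𝔻_{p_e}^cut)`. -/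
def UAp (A : PTree r) (P : Fin r → MvPolynomial A.Idx ℂ) (p : A.Edge → ℝ) :
    Set (Fin r → ℂ) :=
  A.phiMap P '' A.cutRegion p

/-- `U_A = ⋃ U_A^𝔭`, the union over all `A`-admissible tuples of positive
reals `𝔭`. -/
def UA (A : PTree r) (P : Fin r → MvPolynomial A.Idx ℂ) : Set (Fin r → ℂ) :=
  ⋃ (p : A.Edge → ℝ) (_ : (∀ e, 0 < p e) ∧ A.Admissible P p), A.UAp P p

end PTree

/-! The parameter regions `S` are contractible, and `Φ_A` maps each of them homeomorphically onto
its image, with inverse `Ψ_A`; that image is `X_r ∩ Ψ_A⁻¹(S)`, which is open because `Ψ_A` is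
continuous wherever no `ζ_e` vanishes.

The region `ℂ × ℂ^cut × ∏ 𝔻_{p_e}^cut` is star-shaped about `(0, 1, (p_e/2)_e)`. The union of these
regions over all admissible `𝔭` is not, but the radial shrinking
`ζ_e ↦ p_e ζ_e / (p_e + |ζ_e|)` moves each of its points along a segment inside the union into the
region of one fixed admissible `𝔭`, so the identity of the union is homotopic to a map into a
contractible set. -/

open Set Metric Complex

section Contractible

variable {E : Type*} [AddCommGroup E] [Module ℝ E] [TopologicalSpace E] [ContinuousAdd E]
  [ContinuousSMul ℝ E]

theorem contractibleSpace_of_segment_subset {s t : Set E} (hts : t ⊆ s) [ContractibleSpace t]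
    {f : E → E} (hf : ContinuousOn f s) (hft : MapsTo f s t)
    (hseg : ∀ x ∈ s, segment ℝ x (f x) ⊆ s) : ContractibleSpace s := by
  let g : C(s, t) := ⟨hft.restrict f s t, hf.mapsToRestrict hft⟩
  let ι : C(t, s) := ⟨inclusion hts, continuous_inclusion hts⟩
  have hid : (ContinuousMap.id s).Homotopic (ι.comp g) :=
    ⟨{ toFun := fun q => ⟨(1 - (q.1 : ℝ)) • (q.2 : E) + (q.1 : ℝ) • f q.2,
          hseg _ q.2.2 ⟨_, _, sub_nonneg.2 q.1.2.2, q.1.2.1, sub_add_cancel _ _, rfl⟩⟩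
       continuous_toFun := by
         have ht : Continuous fun q : unitInterval × s => (q.1 : ℝ) := by fun_prop
         have hfq : Continuous fun q : unitInterval × s => f q.2 :=
           hf.domRestrict.comp continuous_snd
         exact (((continuous_const.sub ht).smul (by fun_prop)).add (ht.smul hfq)).subtype_mk _
       map_zero_left := fun x => by simp
       map_one_left := fun x => by simp [g, ι] }⟩
  obtain ⟨c, hc⟩ := ((id_nullhomotopic t).comp_left g).comp_right ι
  exact (contractible_iff_id_nullhomotopic s).2 ⟨c, hid.trans hc⟩

end Contractible

def Set.LeftInvOn.homeomorphImage {X Y : Type*} [TopologicalSpace X] [TopologicalSpace Y]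
    {f : X → Y} {g : Y → X} {s : Set X} (h : LeftInvOn g f s) (hf : ContinuousOn f s)
    (hg : ContinuousOn g (f '' s)) : s ≃ₜ f '' s where
  toFun := (mapsTo_image f s).restrict f s (f '' s)
  invFun := (h.mapsTo (surjOn_image f s)).restrict g (f '' s) s
  left_inv x := Subtype.ext (h x.2)
  right_inv y := Subtype.ext (h.rightInvOn_image y.2)
  continuous_toFun := hf.mapsToRestrict _
  continuous_invFun := hg.mapsToRestrict _

theorem cutPlane_eq_slitPlane : cutPlane = slitPlane := rfl

theorem ofReal_mul_mem_slitPlane {c : ℝ} (hc : 0 < c) {z : ℂ} (hz : z ∈ slitPlane) :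
    (c : ℂ) * z ∈ slitPlane := by
  simpa [mem_slitPlane_iff, re_ofReal_mul, im_ofReal_mul, mul_pos_iff_of_pos_left hc, hc.ne']
    using hz

theorem ofReal_mul_mem_slitPlane_inter_ball {c ρ : ℝ} (hc₀ : 0 < c) (hc₁ : c ≤ 1) {z : ℂ}
    (hz : z ∈ slitPlane ∩ ball 0 ρ) : (c : ℂ) * z ∈ slitPlane ∩ ball 0 ρ := by
  refine ⟨ofReal_mul_mem_slitPlane hc₀ hz.1, ?_⟩
  rw [mem_ball_zero_iff, norm_mul, norm_real, Real.norm_of_nonneg hc₀.le]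
  exact (mul_le_of_le_one_left (norm_nonneg z) hc₁).trans_lt (mem_ball_zero_iff.1 hz.2)

theorem isOpen_configSpace (r : ℕ) : IsOpen (ConfigSpace r) := by
  simp only [ConfigSpace, ofPred_forall]
  exact isOpen_iInter_of_finite fun i => isOpen_iInter_of_finite fun j =>
    isOpen_iInter_of_finite fun _ => isOpen_ne_fun (continuous_apply i) (continuous_apply j)

namespace PTree

variable {r : ℕ} {A : PTree r}

def size : PTree r → ℕ
  | .leaf _ => 1
  | .node l t => l.size + t.size + 1

theorem length_le_size {A t : PTree r} {q : List Bool} (h : A.subtreeAt q = some t) :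
    q.length ≤ A.size := by
  induction A generalizing q with
  | leaf i => cases q <;> simp_all [subtreeAt, size]
  | node l s ihl ihs =>
    rcases q with _ | ⟨_ | _, q⟩
    · simp [size]
    · have := ihl (q := q) (by simpa [subtreeAt] using h)
      simp only [size, List.length_cons]; omega
    · have := ihs (q := q) (by simpa [subtreeAt] using h)
      simp only [size, List.length_cons]; omega

instance inst_s12 (A : PTree r) : Finite A.Edge := by
  refine ((List.finite_length_le Bool A.size).subset ?_).to_subtype
  rintro q ⟨-, _, _, h⟩
  exact length_le_size h

theorem continuous_xAt (A : PTree r) (q : List Bool) :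
    Continuous fun z : Fin r → ℂ => A.xAt z q := by
  unfold xAt
  rcases A.subtreeAt q with _ | _ | ⟨l, t⟩
  exacts [continuous_const, continuous_const, (continuous_apply _).sub (continuous_apply _)]

/-- With `x / 0 = 0`, `ζ_e(z) ≠ 0` forces the denominator `x_{u(e)}(z)` to be nonzero. -/
theorem continuousAt_psi {A : PTree r} {z : Fin r → ℂ} (hz : ∀ e : A.Edge, A.zetaAt z e.1 ≠ 0) :
    ContinuousAt A.psi z := by
  refine (continuous_apply _).continuousAt.prodMk
    ((A.continuous_xAt []).continuousAt.prodMk (continuousAt_pi.2 fun e => ?_))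
  exact (A.continuous_xAt _).continuousAt.div (A.continuous_xAt _).continuousAt
    (div_ne_zero_iff.1 (hz e)).2

theorem continuous_phiMap (A : PTree r) (P : Fin r → MvPolynomial A.Idx ℂ) :
    Continuous (A.phiMap P) :=
  continuous_pi fun i => (MvPolynomial.continuous_eval (P i)).comp <| continuous_pi <| by
    rintro (_ | _ | e)
    exacts [continuous_fst, continuous_snd.fst, (continuous_apply e).comp continuous_snd.snd]

/-- `ℂ × ℂ^× × (ℂ^×)^{E(A)}`. -/
def puncturedRegion (A : PTree r) : Set (ℂ × ℂ × (A.Edge → ℂ)) :=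
  {w | w.2.1 ≠ 0 ∧ ∀ e, w.2.2 e ≠ 0}

section Image

variable {P : Fin r → MvPolynomial A.Idx ℂ} {S : Set (ℂ × ℂ × (A.Edge → ℂ))}

theorem PsiPhiId.leftInvOn (h : A.PsiPhiId P) :
    LeftInvOn A.psi (A.phiMap P) A.puncturedRegion :=
  fun w hw => h w hw.1 hw.2

theorem PsiPhiId.continuousAt_psi_phiMap (h : A.PsiPhiId P) {w : ℂ × ℂ × (A.Edge → ℂ)}
    (hw : w ∈ A.puncturedRegion) : ContinuousAt A.psi (A.phiMap P w) := by
  refine continuousAt_psi fun e => ?_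
  change (A.psi (A.phiMap P w)).2.2 e ≠ 0
  rw [h.leftInvOn hw]
  exact hw.2 e

theorem image_phiMap_eq (hPhiPsi : A.PhiPsiId P) (hPsiPhi : A.PsiPhiId P)
    (hS : S ⊆ A.puncturedRegion) (hSX : MapsTo (A.phiMap P) S (ConfigSpace r)) :
    A.phiMap P '' S = ConfigSpace r ∩ A.psi ⁻¹' S := by
  ext z
  constructor
  · rintro ⟨w, hw, rfl⟩
    exact ⟨hSX hw, by rwa [mem_preimage, hPsiPhi.leftInvOn (hS hw)]⟩
  · rintro ⟨hz, hψz⟩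
    exact ⟨_, hψz, hPhiPsi z hz⟩

theorem isOpen_image_phiMap (hPhiPsi : A.PhiPsiId P) (hPsiPhi : A.PsiPhiId P) (hSo : IsOpen S)
    (hS : S ⊆ A.puncturedRegion) (hSX : MapsTo (A.phiMap P) S (ConfigSpace r)) :
    IsOpen (A.phiMap P '' S) := by
  refine isOpen_iff_mem_nhds.2 ?_
  rintro _ ⟨w, hw, rfl⟩
  rw [image_phiMap_eq hPhiPsi hPsiPhi hS hSX]
  refine Filter.inter_mem ((isOpen_configSpace r).mem_nhds (hSX hw)) ?_
  refine (hPsiPhi.continuousAt_psi_phiMap (hS hw)).preimage_mem_nhds (hSo.mem_nhds ?_)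
  rwa [hPsiPhi.leftInvOn (hS hw)]

theorem contractibleSpace_image_phiMap (hPsiPhi : A.PsiPhiId P) (hS : S ⊆ A.puncturedRegion)
    [ContractibleSpace S] : ContractibleSpace (A.phiMap P '' S) := by
  have hψ : ContinuousOn A.psi (A.phiMap P '' S) := by
    rintro _ ⟨w, hw, rfl⟩
    exact (hPsiPhi.continuousAt_psi_phiMap (hS hw)).continuousWithinAt
  exact ((hPsiPhi.leftInvOn.mono hS).homeomorphImage
    (A.continuous_phiMap P).continuousOn hψ).symm.contractibleSpace

end Image

section Regions

variable {p : A.Edge → ℝ}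

theorem cutRegion_eq (A : PTree r) (p : A.Edge → ℝ) :
    A.cutRegion p = univ ×ˢ slitPlane ×ˢ univ.pi fun e => slitPlane ∩ ball 0 (p e) := by
  ext w
  simp [cutRegion, cutPlane_eq_slitPlane]

theorem isOpen_cutRegion (A : PTree r) (p : A.Edge → ℝ) : IsOpen (A.cutRegion p) := by
  rw [cutRegion_eq]
  exact isOpen_univ.prod <| isOpen_slitPlane.prod <|
    isOpen_set_pi finite_univ fun e _ => isOpen_slitPlane.inter isOpen_ball

theorem contractibleSpace_cutRegion (hp : ∀ e, 0 < p e) : ContractibleSpace (A.cutRegion p) := by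
  have hmem : ∀ e, ((p e / 2 : ℝ) : ℂ) ∈ slitPlane ∩ ball 0 (p e) := fun e => by
    refine ⟨ofReal_mem_slitPlane.2 (half_pos (hp e)), ?_⟩
    rw [mem_ball_zero_iff, norm_real, Real.norm_of_nonneg (half_pos (hp e)).le]
    exact half_lt_self (hp e)
  have hstar : StarConvex ℝ (0, 1, fun e => ((p e / 2 : ℝ) : ℂ)) (A.cutRegion p) := by
    rw [cutRegion_eq]
    exact (starConvex_univ 0).prod <| starConvex_one_slitPlane.prod <| starConvex_pi fun e _ =>
      (starConvex_ofReal_slitPlane (half_pos (hp e))).inter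
        ((convex_ball 0 (p e)).starConvex (hmem e).2)
  refine hstar.contractibleSpace ⟨(0, 1, fun e => ((p e / 2 : ℝ) : ℂ)), ?_⟩
  rw [cutRegion_eq]
  exact ⟨mem_univ _, one_mem_slitPlane, fun e _ => hmem e⟩

theorem cutRegion_subset_puncturedRegion : A.cutRegion p ⊆ A.puncturedRegion :=
  fun _ hw => ⟨slitPlane_ne_zero hw.1, fun e => slitPlane_ne_zero (hw.2 e).1⟩

theorem Admissible.mapsTo_cutRegion {P : Fin r → MvPolynomial A.Idx ℂ} (h : A.Admissible P p) :
    MapsTo (A.phiMap P) (A.cutRegion p) (ConfigSpace r) := fun w hw =>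
  h w (cutRegion_subset_puncturedRegion hw).1 fun e =>
    ⟨(cutRegion_subset_puncturedRegion hw).2 e, (hw.2 e).2⟩

def shrinkFactor (p : A.Edge → ℝ) (w : ℂ × ℂ × (A.Edge → ℂ)) (e : A.Edge) : ℝ :=
  p e / (p e + ‖w.2.2 e‖)

theorem shrinkFactor_pos (hp : ∀ e, 0 < p e) (w : ℂ × ℂ × (A.Edge → ℂ)) (e : A.Edge) :
    0 < shrinkFactor p w e :=
  div_pos (hp e) (add_pos_of_pos_of_nonneg (hp e) (norm_nonneg _))

theorem shrinkFactor_le_one (hp : ∀ e, 0 < p e) (w : ℂ × ℂ × (A.Edge → ℂ)) (e : A.Edge) :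
    shrinkFactor p w e ≤ 1 :=
  div_le_one_of_le₀ (le_add_of_nonneg_right (norm_nonneg _))
    (add_pos_of_pos_of_nonneg (hp e) (norm_nonneg _)).le

theorem continuous_shrinkFactor (hp : ∀ e, 0 < p e) (e : A.Edge) :
    Continuous fun w => shrinkFactor p w e :=
  continuous_const.div (continuous_const.add (by fun_prop)) fun _ =>
    (add_pos_of_pos_of_nonneg (hp e) (norm_nonneg _)).ne'

def shrink (p : A.Edge → ℝ) (w : ℂ × ℂ × (A.Edge → ℂ)) : ℂ × ℂ × (A.Edge → ℂ) :=
  (w.1, w.2.1, fun e => (shrinkFactor p w e : ℂ) * w.2.2 e)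

theorem continuous_shrink (hp : ∀ e, 0 < p e) : Continuous (A.shrink p) :=
  continuous_fst.prodMk <| continuous_snd.fst.prodMk <| continuous_pi fun e =>
    (continuous_ofReal.comp (continuous_shrinkFactor hp e)).mul (by fun_prop)

theorem shrink_mem_cutRegion (hp : ∀ e, 0 < p e) {p' : A.Edge → ℝ} {w : ℂ × ℂ × (A.Edge → ℂ)}
    (hw : w ∈ A.cutRegion p') : A.shrink p w ∈ A.cutRegion p := by
  refine ⟨hw.1, fun e => ⟨ofReal_mul_mem_slitPlane (shrinkFactor_pos hp w e) (hw.2 e).1, ?_⟩⟩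
  have hpos : 0 < p e + ‖w.2.2 e‖ := add_pos_of_pos_of_nonneg (hp e) (norm_nonneg _)
  change ‖(shrinkFactor p w e : ℂ) * w.2.2 e‖ < p e
  rw [norm_mul, norm_real, Real.norm_of_nonneg (shrinkFactor_pos hp w e).le, shrinkFactor,
    div_mul_eq_mul_div, div_lt_iff₀ hpos]
  exact mul_lt_mul_of_pos_left (lt_add_of_pos_left _ (hp e)) (hp e)

theorem segment_shrink_subset (hp : ∀ e, 0 < p e) {p' : A.Edge → ℝ}
    {w : ℂ × ℂ × (A.Edge → ℂ)} (hw : w ∈ A.cutRegion p') :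
    segment ℝ w (A.shrink p w) ⊆ A.cutRegion p' := by
  rintro _ ⟨a, b, ha, hb, hab, rfl⟩
  rw [cutRegion_eq] at hw ⊢
  refine ⟨mem_univ _, ?_, fun e _ => ?_⟩
  · change a • w.2.1 + b • w.2.1 ∈ slitPlane
    rw [← add_smul, hab, one_smul]
    exact hw.2.1
  · set m := shrinkFactor p w e
    have hm₀ : 0 < m := shrinkFactor_pos hp w e
    have hm₁ : m ≤ 1 := shrinkFactor_le_one hp w e
    change a • w.2.2 e + b • ((m : ℂ) * w.2.2 e) ∈ _
    have hcoeff : a • w.2.2 e + b • ((m : ℂ) * w.2.2 e) = ((a + b * m : ℝ) : ℂ) * w.2.2 e := by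
      simp only [real_smul]
      push_cast
      ring
    rw [hcoeff]
    exact ofReal_mul_mem_slitPlane_inter_ball (by nlinarith [mul_le_of_le_one_right ha hm₁])
      (by nlinarith) (hw.2.2 e trivial)

end Regions

section Admissible

variable {P : Fin r → MvPolynomial A.Idx ℂ}

def admissibleRegion (A : PTree r) (P : Fin r → MvPolynomial A.Idx ℂ) :
    Set (ℂ × ℂ × (A.Edge → ℂ)) :=
  ⋃ (p : A.Edge → ℝ) (_ : (∀ e, 0 < p e) ∧ A.Admissible P p), A.cutRegion p

theorem UA_eq_image_admissibleRegion : A.UA P = A.phiMap P '' A.admissibleRegion P := by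
  simp only [UA, UAp, admissibleRegion, image_iUnion]

theorem isOpen_admissibleRegion : IsOpen (A.admissibleRegion P) :=
  isOpen_biUnion fun p _ => A.isOpen_cutRegion p

theorem admissibleRegion_subset_puncturedRegion : A.admissibleRegion P ⊆ A.puncturedRegion :=
  iUnion₂_subset fun _ _ => cutRegion_subset_puncturedRegion

theorem mapsTo_admissibleRegion : MapsTo (A.phiMap P) (A.admissibleRegion P) (ConfigSpace r) :=
  fun w hw => by
    obtain ⟨p, ⟨-, hadm⟩, hw⟩ := mem_iUnion₂.1 hw
    exact hadm.mapsTo_cutRegion hw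

theorem contractibleSpace_admissibleRegion {p : A.Edge → ℝ} (hp : ∀ e, 0 < p e)
    (hadm : A.Admissible P p) : ContractibleSpace (A.admissibleRegion P) := by
  have := contractibleSpace_cutRegion hp
  refine contractibleSpace_of_segment_subset (subset_iUnion₂_of_subset p ⟨hp, hadm⟩ subset_rfl)
    (continuous_shrink hp).continuousOn (fun w hw => ?_) (fun w hw => ?_)
  all_goals obtain ⟨p', hp', hw⟩ := mem_iUnion₂.1 hw
  · exact shrink_mem_cutRegion hp hw
  · exact (segment_shrink_subset hp hw).trans (subset_iUnion₂_of_subset p' hp' subset_rfl)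

theorem isOpen_isConnected_simplyConnectedSpace_image_phiMap {S : Set (ℂ × ℂ × (A.Edge → ℂ))}
    (hPhiPsi : A.PhiPsiId P) (hPsiPhi : A.PsiPhiId P) (hSo : IsOpen S) (hS : S ⊆ A.puncturedRegion)
    (hSX : MapsTo (A.phiMap P) S (ConfigSpace r)) [ContractibleSpace S] :
    IsOpen (A.phiMap P '' S) ∧ IsConnected (A.phiMap P '' S) ∧
      SimplyConnectedSpace (A.phiMap P '' S) ∧ A.phiMap P '' S ⊆ ConfigSpace r := by
  have := contractibleSpace_image_phiMap hPsiPhi hS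
  exact ⟨isOpen_image_phiMap hPhiPsi hPsiPhi hSo hS hSX,
    isConnected_iff_connectedSpace.2 inferInstance, inferInstance, hSX.image_subset⟩

end Admissible

end PTree

theorem stmt_12_general {r : ℕ} (A : PTree r)
    (P : Fin r → MvPolynomial A.Idx ℂ)
    (hPhiPsi : A.PhiPsiId P) (hPsiPhi : A.PsiPhiId P)
    (p : A.Edge → ℝ) (hp : ∀ e, 0 < p e) (hadm : A.Admissible P p) :
    (IsOpen (A.UAp P p) ∧ IsConnected (A.UAp P p) ∧
      SimplyConnectedSpace (A.UAp P p) ∧ A.UAp P p ⊆ ConfigSpace r) ∧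
    (IsOpen (A.UA P) ∧ IsConnected (A.UA P) ∧
      SimplyConnectedSpace (A.UA P) ∧ A.UA P ⊆ ConfigSpace r) := by
  have := PTree.contractibleSpace_cutRegion hp
  have := PTree.contractibleSpace_admissibleRegion hp hadm
  rw [PTree.UA_eq_image_admissibleRegion]
  exact ⟨PTree.isOpen_isConnected_simplyConnectedSpace_image_phiMap hPhiPsi hPsiPhi
      (A.isOpen_cutRegion p) PTree.cutRegion_subset_puncturedRegion hadm.mapsTo_cutRegion,
    PTree.isOpen_isConnected_simplyConnectedSpace_image_phiMap hPhiPsi hPsiPhi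
      PTree.isOpen_admissibleRegion PTree.admissibleRegion_subset_puncturedRegion
      PTree.mapsTo_admissibleRegion⟩

/-- Let `r ≥ 3`, `A ∈ 𝒯_r`, let `Φ_A` be the polynomial map inverting `Ψ_A`,
and let `𝔭 = (p_e)_{e∈E(A)}` be an `A`-admissible tuple of positive reals.
Then `U_A^𝔭` is an open, connected and simply connected subset of `X_r`, and
the same holds for `U_A = ⋃ U_A^𝔭` (union over all `A`-admissible tuples). -/
theorem stmt_12 {r : ℕ} (hr : 3 ≤ r) (A : PTree r) (hA : A.IsTree)
    (P : Fin r → MvPolynomial A.Idx ℂ)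
    (hPhiPsi : A.PhiPsiId P) (hPsiPhi : A.PsiPhiId P)
    (p : A.Edge → ℝ) (hp : ∀ e, 0 < p e) (hadm : A.Admissible P p) :
    (IsOpen (A.UAp P p) ∧ IsConnected (A.UAp P p) ∧
      SimplyConnectedSpace (A.UAp P p) ∧ A.UAp P p ⊆ ConfigSpace r) ∧
    (IsOpen (A.UA P) ∧ IsConnected (A.UA P) ∧
      SimplyConnectedSpace (A.UA P) ∧ A.UA P ⊆ ConfigSpace r) :=
  stmt_12_general A P hPhiPsi hPsiPhi p hp hadm
end
end
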